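/- arXiv:1512.06788 — 7 statements merged into one kernel-verified Lean document; each statement's English description precedes it below -/
import Mathlib

section
/- Let M_i = (E_i, X_i, S_i, ι_i, δ_i, λ_i) for i = 1, …, n be generalized Moore machines, let E be an event alphabet, and let φ_i : E × X_1 × ⋯ × X_n → E_i be feedback maps. Define the general product machine M = Π_{i=1}^n [M_i, φ_i] with state set S = S_1 × ⋯ × S_n, initial state (ι_1, …, ι_n), output X_1 × ⋯ × X_n, output map (s_1, …, s_n) ↦ (λ_1(s_1), …, λ_n(s_n)), and transition map δ((s_1, …, s_n), e) = (δ_1(s_1, e_1), …, δ_n(s_n, e_n)) where e_i = φ_i(e, λ_1(s_1), …, λ_n(s_n)). Let f_i = M_i* and define g_i : E* → E_i* recursively by g_i(nulls) = nulls and g_i(w.e) = g_i(w).φ_i(e, f_1(g_1(w)), …, f_n(g_n(w))). Then the function F(w) = (f_1(g_1(w)), …, f_n(g_n(w))) satisfies F = M*, i.e. F(w) = M*(w) for all w ∈ E*. -/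
/-- A generalized Moore machine `(E, X, S, ι, δ, λ)`: event alphabet `E`, output set `X`,
state set `S`, initial state `init`, transition map `trans` and output map `out`. -/
structure Moore (E : Type*) (X : Type*) where
  S : Type*
  init : S
  trans : S → E → S
  out : S → X

/-- The primitive recursive extension `δ*` of the transition map:
`δ*(nulls) = ι` and `δ*(w.e) = δ(δ*(w), e)`. -/
def Moore.run {E X : Type*} (M : Moore E X) (w : List E) : M.S :=
  w.foldl M.trans M.init

/-- `M*(w) = λ(δ*(w))`. -/
def Moore.star {E X : Type*} (M : Moore E X) (w : List E) : X :=
  M.out (M.run w)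

/-- The general product `Π_{i=1}^n [M_i, φ_i]` of generalized Moore machines: state set
`S₁ × ⋯ × S_n`, initial state `(ι₁, …, ι_n)`, output map `(λ₁(s₁), …, λ_n(s_n))`, and
transition `δ((s₁,…,s_n), e) = (δ₁(s₁,e₁), …, δ_n(s_n,e_n))` where
`e_i = φ_i(e, λ₁(s₁), …, λ_n(s_n))`. -/
def prodMoore {n : ℕ} {E : Type*} {Ei Xi : Fin n → Type*}
    (M : ∀ i, Moore (Ei i) (Xi i))
    (φ : ∀ i, E → (∀ j, Xi j) → Ei i) : Moore E (∀ i, Xi i) where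
  S := ∀ i, (M i).S
  init := fun i => (M i).init
  trans := fun s e i => (M i).trans (s i) (φ i e (fun j => (M j).out (s j)))
  out := fun s i => (M i).out (s i)

namespace Moore

variable {E X : Type*} (M : Moore E X)

@[simp]
theorem run_nil : M.run [] = M.init := rfl

@[simp]
theorem run_append_singleton (w : List E) (e : E) :
    M.run (w ++ [e]) = M.trans (M.run w) e := by
  simp [run, List.foldl_append]

end Moore

section prodMoore

variable {n : ℕ} {E : Type*} {Ei Xi : Fin n → Type*}
  (M : ∀ i, Moore (Ei i) (Xi i)) (φ : ∀ i, E → (∀ j, Xi j) → Ei i)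

theorem prodMoore_star_apply (w : List E) (i : Fin n) :
    (prodMoore M φ).star w i = (M i).out ((prodMoore M φ).run w i) := rfl

theorem prodMoore_trans_apply (s : (prodMoore M φ).S) (e : E) (i : Fin n) :
    (prodMoore M φ).trans s e i = (M i).trans (s i) (φ i e fun j => (M j).out (s j)) := rfl

theorem prodMoore_run_apply (g : ∀ i, List E → List (Ei i))
    (hg0 : ∀ i, g i [] = [])
    (hgs : ∀ i (w : List E) (e : E),
      g i (w ++ [e]) = g i w ++ [φ i e (fun j => (M j).star (g j w))])
    (w : List E) (i : Fin n) :
    (prodMoore M φ).run w i = (M i).run (g i w) := by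
  induction w using List.reverseRecOn generalizing i with
  | nil => simp [hg0, prodMoore]
  | append_singleton w e ih =>
    simp only [Moore.run_append_singleton, prodMoore_trans_apply, hgs, ih, Moore.star]

end prodMoore

/-- **The general product computes componentwise substitution.** With `f_i = M_i*` and
`g_i : E* → E_i*` defined recursively by `g_i(nulls) = nulls` and
`g_i(w.e) = g_i(w).φ_i(e, f₁(g₁(w)), …, f_n(g_n(w)))`, the function
`F(w) = (f₁(g₁(w)), …, f_n(g_n(w)))` equals `M*` for the product machine `M`. -/
theorem general_product_recursive {n : ℕ} {E : Type*} {Ei Xi : Fin n → Type*}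
    (M : ∀ i, Moore (Ei i) (Xi i))
    (φ : ∀ i, E → (∀ j, Xi j) → Ei i)
    (g : ∀ i, List E → List (Ei i))
    (hg0 : ∀ i, g i [] = [])
    (hgs : ∀ i (w : List E) (e : E),
      g i (w ++ [e]) = g i w ++ [φ i e (fun j => (M j).star (g j w))])
    (F : List E → ∀ i, Xi i)
    (hF : ∀ (w : List E) (i : Fin n), F w i = (M i).star (g i w)) :
    ∀ w : List E, F w = (prodMoore M φ).star w := by
  intro w
  funext i
  rw [hF, prodMoore_star_apply, prodMoore_run_apply M φ g hg0 hgs, Moore.star]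
end

section
/- Say a function f : E* → X is finite state if the set S_f of equivalence classes of E* under ∼_f (where w ∼_f z iff f(concat(w,u)) = f(concat(z,u)) for all u ∈ E*) is finite. Let f_i : E_i* → X_i for i = 1, …, n be finite state functions, and let φ_i : E × X_1 × ⋯ × X_n → E_i* be finite-sequence-valued feedback maps. Define g_i : E* → E_i* recursively by g_i(nulls) = nulls and g_i(w.e) = concat(g_i(w), φ_i(e, f_1(g_1(w)), …, f_n(g_n(w)))), and define Y : E* → X_1 × ⋯ × X_n by Y(w) = (f_1(g_1(w)), …, f_n(g_n(w))). Then Y is finite state. -/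
/-! If every component state `g i w` is known up to `∼_{f i}`, then so is every later component
state `g i (w ++ u)`: the feedback `φ` only reads the outputs `f j (g j w)`, which `∼_{f j}`
preserves, and `∼_{f i}` is a right congruence. Hence the tuple of component classes determines
the `∼_Y`-class, so `∼_Y` has at most `∏ i, |S_{f i}|` classes. -/

/-- The Nerode-style setoid on words: `w ∼_f z` iff `f (w ++ u) = f (z ++ u)` for all `u`. -/
def nerodeSetoid {E X : Type*} (f : List E → X) : Setoid (List E) where
  r w z := ∀ u : List E, f (w ++ u) = f (z ++ u)
  iseqv := ⟨fun _ _ => rfl, fun h u => (h u).symm, fun h₁ h₂ u => (h₁ u).trans (h₂ u)⟩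

/-- `f : E* → X` is finite state if the set `S_f` of `∼_f`-equivalence classes is finite. -/
def FiniteState {E X : Type*} (f : List E → X) : Prop :=
  Finite (Quotient (nerodeSetoid f))

theorem Setoid.finite_quotient_of_forall_rel {α ι : Type*} [Finite ι] {β : ι → Type*}
    (s : Setoid α) (t : ∀ i, Setoid (β i)) [∀ i, Finite (Quotient (t i))] (k : ∀ i, α → β i)
    (h : ∀ a b, (∀ i, t i (k i a) (k i b)) → s a b) : Finite (Quotient s) := by
  refine Finite.of_injective (fun c i => Quotient.mk (t i) (k i c.out)) fun c c' hcc' => ?_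
  rw [← Quotient.out_eq c, ← Quotient.out_eq c']
  exact Quotient.sound <| h _ _ fun i => Quotient.exact (congrFun hcc' i)

namespace nerodeSetoid

variable {E X : Type*} {f : List E → X} {w z : List E}

theorem apply_eq (h : nerodeSetoid f w z) : f w = f z := by
  simpa using h []

theorem append_right (h : nerodeSetoid f w z) (v : List E) :
    nerodeSetoid f (w ++ v) (z ++ v) := fun u => by
  simpa using h (v ++ u)

end nerodeSetoid

section Feedback

variable {n : ℕ} {E : Type*} {Ei Xi : Fin n → Type*} (f : ∀ i, List (Ei i) → Xi i)
  (φ : ∀ i, E → (∀ j, Xi j) → List (Ei i)) (g : ∀ i, List E → List (Ei i))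

theorem nerodeSetoid_feedback_append
    (hgs : ∀ i (w : List E) (e : E), g i (w ++ [e]) = g i w ++ φ i e (fun j => f j (g j w)))
    {w z : List E} (h : ∀ i, nerodeSetoid (f i) (g i w) (g i z)) (u : List E) (i : Fin n) :
    nerodeSetoid (f i) (g i (w ++ u)) (g i (z ++ u)) := by
  induction u using List.reverseRecOn generalizing i with
  | nil => simpa using h i
  | append_singleton u e ih =>
    have hout : (fun j => f j (g j (w ++ u))) = fun j => f j (g j (z ++ u)) :=
      funext fun j => nerodeSetoid.apply_eq (ih j)
    rw [← List.append_assoc, ← List.append_assoc, hgs, hgs, hout]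
    exact nerodeSetoid.append_right (ih i) _

end Feedback

theorem general_product_finite_state_general {n : ℕ} {E : Type*} {Ei Xi : Fin n → Type*}
    (f : ∀ i, List (Ei i) → Xi i)
    (hfin : ∀ i, FiniteState (f i))
    (φ : ∀ i, E → (∀ j, Xi j) → List (Ei i))
    (g : ∀ i, List E → List (Ei i))
    (hgs : ∀ i (w : List E) (e : E),
      g i (w ++ [e]) = g i w ++ φ i e (fun j => f j (g j w)))
    (Y : List E → ∀ i, Xi i)
    (hY : ∀ (w : List E) (i : Fin n), Y w i = f i (g i w)) :
    FiniteState Y := by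
  have : ∀ i, Finite (Quotient (nerodeSetoid (f i))) := hfin
  refine Setoid.finite_quotient_of_forall_rel _ (fun i => nerodeSetoid (f i)) g
    fun w z h u => funext fun i => ?_
  rw [hY, hY]
  exact nerodeSetoid.apply_eq (nerodeSetoid_feedback_append f φ g hgs h u i)

/-- **The general product of finite state variables with sequence-valued feedback is finite
state.** Given finite state `f_i : E_i* → X_i`, sequence-valued feedback maps
`φ_i : E × X₁ × ⋯ × X_n → E_i*`, and `g_i : E* → E_i*` defined recursively by
`g_i(nulls) = nulls` and `g_i(w.e) = concat(g_i(w), φ_i(e, f₁(g₁(w)), …, f_n(g_n(w))))`,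
the product `Y(w) = (f₁(g₁(w)), …, f_n(g_n(w)))` is finite state. -/
theorem general_product_finite_state {n : ℕ} {E : Type*} {Ei Xi : Fin n → Type*}
    (f : ∀ i, List (Ei i) → Xi i)
    (hfin : ∀ i, FiniteState (f i))
    (φ : ∀ i, E → (∀ j, Xi j) → List (Ei i))
    (g : ∀ i, List E → List (Ei i))
    (hg0 : ∀ i, g i [] = [])
    (hgs : ∀ i (w : List E) (e : E),
      g i (w ++ [e]) = g i w ++ φ i e (fun j => f j (g j w)))
    (Y : List E → ∀ i, Xi i)
    (hY : ∀ (w : List E) (i : Fin n), Y w i = f i (g i w)) :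
    FiniteState Y :=
  general_product_finite_state_general f hfin φ g hgs Y hY
end

section
/- Consider a network of nodes indexed by a set N of node names, over a network event alphabet E. For each n ∈ N let u_n : E* → E_node* be the node's event-history state variable, with initial u_n = nulls (up to the initial name marker) and, for each network event e, (after e) u_n ∈ {u_n, u_n.e' : e' ∈ E_node} (each node advances at most one step per network step). Assume the no-spurious-messages axiom: whenever (after e) u_{n} = u_{n}.rx[m] for some m ∈ Messages, there exists a node n' with (after e) u_{n'} = u_{n'}.tx and T(u_{n'}) = m ∈ Messages. Let R and S be the received-set and sent-set state variables of each node, defined recursively from its event history (R(nulls)=S(nulls)=∅; rx[m] adds m to R; tx adds T(w) to S when T(w) ∈ Messages). Then for every network history x ∈ E*, every node n₁ ∈ N, and every message m ∈ Messages: if m ∈ R(u_{n₁}(x)) then there exists n₂ ∈ N with m ∈ S(u_{n₂}(x)). -/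
/-!
Induction on the network history. Sent sets only grow along a history, so a message received
before the last network step stays witnessed; a message received at the last step arrives by an
`rx m` event, and the no-spurious-messages axiom supplies a simultaneous `tx` of `m`.
-/

section NodeHistory

variable {E α β : Type*}

theorem subset_sent_append_singleton {S : List α → Set β} {tx : α} {T : List α → Option β}
    (hStx : ∀ (w : List α) (m : β), T w = some m → S (w ++ [tx]) = S w ∪ {m})
    (hStxnull : ∀ w : List α, T w = none → S (w ++ [tx]) = S w)
    (hSother : ∀ (w : List α) (e : α), e ≠ tx → S (w ++ [e]) = S w)
    (w : List α) (e : α) : S w ⊆ S (w ++ [e]) := by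
  by_cases he : e = tx
  · subst he
    cases hT : T w with
    | none => rw [hStxnull w hT]
    | some m => rw [hStx w m hT]; exact Set.subset_union_left
  · rw [hSother w e he]

theorem mem_received_append_singleton {R : List α → Set β} {rx : β → α}
    (hRrx : ∀ (w : List α) (m : β), R (w ++ [rx m]) = R w ∪ {m})
    (hRother : ∀ (w : List α) (e : α), (∀ m : β, e ≠ rx m) → R (w ++ [e]) = R w)
    {w : List α} {e : α} {m : β} (hm : m ∈ R (w ++ [e])) : m ∈ R w ∨ e = rx m := by
  by_cases hrx : ∃ m', e = rx m'
  · obtain ⟨m', rfl⟩ := hrx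
    rw [hRrx] at hm
    exact hm.imp_right fun h => by rw [Set.mem_singleton_iff.mp h]
  · push Not at hrx
    rw [hRother w e hrx] at hm
    exact .inl hm

variable {v : List E → List α} {x : List E} {e : E}

theorem subset_of_step {S : List α → Set β} (hS : ∀ (w : List α) (e' : α), S w ⊆ S (w ++ [e']))
    (hstep : v (x ++ [e]) = v x ∨ ∃ e' : α, v (x ++ [e]) = v x ++ [e']) :
    S (v x) ⊆ S (v (x ++ [e])) := by
  rcases hstep with h | ⟨e', h⟩
  · rw [h]
  · rw [h]; exact hS _ _

theorem mem_received_of_step {R : List α → Set β} {rx : β → α}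
    (hRrx : ∀ (w : List α) (m : β), R (w ++ [rx m]) = R w ∪ {m})
    (hRother : ∀ (w : List α) (e : α), (∀ m : β, e ≠ rx m) → R (w ++ [e]) = R w)
    (hstep : v (x ++ [e]) = v x ∨ ∃ e' : α, v (x ++ [e]) = v x ++ [e'])
    {m : β} (hm : m ∈ R (v (x ++ [e]))) : m ∈ R (v x) ∨ v (x ++ [e]) = v x ++ [rx m] := by
  rcases hstep with h | ⟨e', h⟩
  · exact .inl (h ▸ hm)
  · rw [h] at hm ⊢
    exact (mem_received_append_singleton hRrx hRother hm).imp_right fun h => by rw [h]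

end NodeHistory

theorem received_implies_sent_general {E Enode Msg N : Type*}
    (tx : Enode) (rx : Msg → Enode) (name : N → Enode)
    (hname_rx : ∀ (n : N) (m : Msg), name n ≠ rx m)
    (T : List Enode → Option Msg)
    (R S : List Enode → Set Msg)
    (hR0 : R [] = ∅)
    (hRrx : ∀ (w : List Enode) (m : Msg), R (w ++ [rx m]) = R w ∪ {m})
    (hRother : ∀ (w : List Enode) (e : Enode), (∀ m : Msg, e ≠ rx m) → R (w ++ [e]) = R w)
    (hStx : ∀ (w : List Enode) (m : Msg), T w = some m → S (w ++ [tx]) = S w ∪ {m})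
    (hStxnull : ∀ w : List Enode, T w = none → S (w ++ [tx]) = S w)
    (hSother : ∀ (w : List Enode) (e : Enode), e ≠ tx → S (w ++ [e]) = S w)
    (u : N → List E → List Enode)
    (hinit : ∀ n : N, u n [] = [name n])
    (hstep : ∀ (n : N) (x : List E) (e : E),
      u n (x ++ [e]) = u n x ∨ ∃ e' : Enode, u n (x ++ [e]) = u n x ++ [e'])
    (hnospur : ∀ (n : N) (x : List E) (e : E) (m : Msg),
      u n (x ++ [e]) = u n x ++ [rx m] →
      ∃ n' : N, u n' (x ++ [e]) = u n' x ++ [tx] ∧ T (u n' x) = some m) :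
    ∀ (x : List E) (n₁ : N) (m : Msg), m ∈ R (u n₁ x) → ∃ n₂ : N, m ∈ S (u n₂ x) := by
  have hSmono := subset_sent_append_singleton hStx hStxnull hSother
  intro x
  induction x using List.reverseRecOn with
  | nil =>
    intro n₁ m hm
    rw [hinit, ← List.nil_append [name n₁], hRother [] _ (hname_rx n₁), hR0] at hm
    exact hm.elim
  | append_singleton x e ih =>
    intro n₁ m hm
    rcases mem_received_of_step hRrx hRother (hstep n₁ x e) hm with hold | hnew
    · obtain ⟨n₂, hn₂⟩ := ih n₁ m hold
      exact ⟨n₂, subset_of_step hSmono (hstep n₂ x e) hn₂⟩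
    · obtain ⟨n₂, htx, hT⟩ := hnospur n₁ x e m hnew
      exact ⟨n₂, by rw [htx, hStx _ _ hT]; exact Set.mem_union_right _ rfl⟩

/-- **Lemma 1: a received message must have been sent by some node.** Nodes `n ∈ N` have
event-history state variables `u n : E* → E_node*`, initially just the node's name marker,
advancing at most one node step per network step. Every receive event `rx m` at any node
must be simultaneous with a `tx` event at some node whose transmit variable `T` equals `m`
(no spurious messages); `tx` events need not be received. `R` and `S` are the received and
sent message sets of a node history, defined recursively (`rx m` adds `m` to `R`; `tx`
adds `T` to `S` when `T` is a message; both start empty). Then for every network history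
`x`, node `n₁` and message `m`: `m ∈ R(u n₁ x)` implies `m ∈ S(u n₂ x)` for some `n₂`. -/
theorem received_implies_sent {E Enode Msg N : Type*}
    (tx : Enode) (rx : Msg → Enode) (name : N → Enode)
    (hname_rx : ∀ (n : N) (m : Msg), name n ≠ rx m)
    (hname_tx : ∀ n : N, name n ≠ tx)
    (T : List Enode → Option Msg)
    (R S : List Enode → Set Msg)
    (hR0 : R [] = ∅) (hS0 : S [] = ∅)
    (hRrx : ∀ (w : List Enode) (m : Msg), R (w ++ [rx m]) = R w ∪ {m})
    (hRother : ∀ (w : List Enode) (e : Enode), (∀ m : Msg, e ≠ rx m) → R (w ++ [e]) = R w)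
    (hStx : ∀ (w : List Enode) (m : Msg), T w = some m → S (w ++ [tx]) = S w ∪ {m})
    (hStxnull : ∀ w : List Enode, T w = none → S (w ++ [tx]) = S w)
    (hSother : ∀ (w : List Enode) (e : Enode), e ≠ tx → S (w ++ [e]) = S w)
    (u : N → List E → List Enode)
    (hinit : ∀ n : N, u n [] = [name n])
    (hstep : ∀ (n : N) (x : List E) (e : E),
      u n (x ++ [e]) = u n x ∨ ∃ e' : Enode, u n (x ++ [e]) = u n x ++ [e'])
    (hnospur : ∀ (n : N) (x : List E) (e : E) (m : Msg),
      u n (x ++ [e]) = u n x ++ [rx m] →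
      ∃ n' : N, u n' (x ++ [e]) = u n' x ++ [tx] ∧ T (u n' x) = some m) :
    ∀ (x : List E) (n₁ : N) (m : Msg), m ∈ R (u n₁ x) → ∃ n₂ : N, m ∈ S (u n₂ x) :=
  received_implies_sent_general tx rx name hname_rx T R S hR0 hRrx hRother hStx hStxnull hSother u
    hinit hstep hnospur
end

section
/- In the broadcast network model, suppose additionally that there is a subset D ⊆ Messages of data messages and for each d ∈ D and n ∈ N a unique acknowledgment message a_{d,n} ∈ Messages, and that every node satisfies the ack-transmit constraint: T = a_{d,n} implies d ∈ R and (Id = n or a_{d,n} ∈ R), where Id is the node's own name. Then for every network history x ∈ E*, every d ∈ D, and all nodes n, n' ∈ N: if a_{d,n'} ∈ R(u_n(x)) for some n, then a_{d,n'} ∈ S(u_{n'}(x)). -/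
/-!
Induction on the network history `x`. A new message enters `R` only through a receive event,
which by the no-spurious-messages condition is simultaneous with some node `n''` transmitting it.
If that message is `a_{d,n'}`, the ack-transmit constraint leaves two cases: `n'' = n'`, so `n'`
itself is sending it right now, or `n''` had already received `a_{d,n'}`, and the induction
hypothesis applies. Since sent sets only grow, old facts persist.
-/

section Broadcast

variable {E Enode Msg N : Type*}

theorem subset_S_append {tx : Enode} {T : List Enode → Option Msg} {S : List Enode → Set Msg}
    (hStx : ∀ (w : List Enode) (m : Msg), T w = some m → S (w ++ [tx]) = S w ∪ {m})
    (hStxnull : ∀ w : List Enode, T w = none → S (w ++ [tx]) = S w)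
    (hSother : ∀ (w : List Enode) (e : Enode), e ≠ tx → S (w ++ [e]) = S w)
    (w : List Enode) (e : Enode) : S w ⊆ S (w ++ [e]) := by
  by_cases he : e = tx
  · subst he
    cases hT : T w with
    | none => rw [hStxnull _ hT]
    | some m => rw [hStx _ _ hT]; exact Set.subset_union_left
  · rw [hSother _ _ he]

theorem mem_R_append_cases {rx : Msg → Enode} {R : List Enode → Set Msg}
    (hRrx : ∀ (w : List Enode) (m : Msg), R (w ++ [rx m]) = R w ∪ {m})
    (hRother : ∀ (w : List Enode) (e : Enode), (∀ m : Msg, e ≠ rx m) → R (w ++ [e]) = R w)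
    {w : List Enode} {e : Enode} {m : Msg} (h : m ∈ R (w ++ [e])) : m ∈ R w ∨ e = rx m := by
  by_cases he : ∃ m', e = rx m'
  · obtain ⟨m', rfl⟩ := he
    rw [hRrx] at h
    rcases h with h | rfl
    · exact .inl h
    · exact .inr rfl
  · rw [hRother _ _ (not_exists.mp he)] at h
    exact .inl h

variable {tx : Enode} {rx : Msg → Enode} {T : List Enode → Option Msg}
  {R S : List Enode → Set Msg} {u : N → List E → List Enode}

theorem R_u_nil {name : N → Enode} (hname_rx : ∀ (n : N) (m : Msg), name n ≠ rx m)
    (hR0 : R [] = ∅)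
    (hRrx : ∀ (w : List Enode) (m : Msg), R (w ++ [rx m]) = R w ∪ {m})
    (hRother : ∀ (w : List Enode) (e : Enode), (∀ m : Msg, e ≠ rx m) → R (w ++ [e]) = R w)
    (hinit : ∀ n : N, u n [] = [name n]) (n : N) : R (u n []) = ∅ := by
  refine Set.eq_empty_of_forall_notMem fun m hm => ?_
  rw [hinit, ← List.nil_append [name n]] at hm
  rcases mem_R_append_cases hRrx hRother hm with hm | hm
  · simp [hR0] at hm
  · exact hname_rx n m hm

theorem S_u_subset_append
    (hStx : ∀ (w : List Enode) (m : Msg), T w = some m → S (w ++ [tx]) = S w ∪ {m})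
    (hStxnull : ∀ w : List Enode, T w = none → S (w ++ [tx]) = S w)
    (hSother : ∀ (w : List Enode) (e : Enode), e ≠ tx → S (w ++ [e]) = S w)
    (hstep : ∀ (n : N) (x : List E) (e : E),
      u n (x ++ [e]) = u n x ∨ ∃ e' : Enode, u n (x ++ [e]) = u n x ++ [e'])
    (n : N) (x : List E) (e : E) : S (u n x) ⊆ S (u n (x ++ [e])) := by
  rcases hstep n x e with h | ⟨e', h⟩
  · rw [h]
  · rw [h]
    exact subset_S_append hStx hStxnull hSother _ e'

theorem mem_R_u_append_cases
    (hRrx : ∀ (w : List Enode) (m : Msg), R (w ++ [rx m]) = R w ∪ {m})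
    (hRother : ∀ (w : List Enode) (e : Enode), (∀ m : Msg, e ≠ rx m) → R (w ++ [e]) = R w)
    (hstep : ∀ (n : N) (x : List E) (e : E),
      u n (x ++ [e]) = u n x ∨ ∃ e' : Enode, u n (x ++ [e]) = u n x ++ [e'])
    (hnospur : ∀ (n : N) (x : List E) (e : E) (m : Msg),
      u n (x ++ [e]) = u n x ++ [rx m] →
      ∃ n' : N, u n' (x ++ [e]) = u n' x ++ [tx] ∧ T (u n' x) = some m)
    {n : N} {x : List E} {e : E} {m : Msg} (hm : m ∈ R (u n (x ++ [e]))) :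
    m ∈ R (u n x) ∨ ∃ n' : N, u n' (x ++ [e]) = u n' x ++ [tx] ∧ T (u n' x) = some m := by
  rcases hstep n x e with h | ⟨e', h⟩
  · rw [h] at hm
    exact .inl hm
  · rw [h] at hm
    rcases mem_R_append_cases hRrx hRother hm with hm | rfl
    · exact .inl hm
    · exact .inr (hnospur n x e m h)

end Broadcast

theorem ack_received_implies_ack_sent_general {E Enode Msg N : Type*}
    (tx : Enode) (rx : Msg → Enode) (name : N → Enode)
    (hname_rx : ∀ (n : N) (m : Msg), name n ≠ rx m)
    (T : List Enode → Option Msg)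
    (R S : List Enode → Set Msg)
    (hR0 : R [] = ∅)
    (hRrx : ∀ (w : List Enode) (m : Msg), R (w ++ [rx m]) = R w ∪ {m})
    (hRother : ∀ (w : List Enode) (e : Enode), (∀ m : Msg, e ≠ rx m) → R (w ++ [e]) = R w)
    (hStx : ∀ (w : List Enode) (m : Msg), T w = some m → S (w ++ [tx]) = S w ∪ {m})
    (hStxnull : ∀ w : List Enode, T w = none → S (w ++ [tx]) = S w)
    (hSother : ∀ (w : List Enode) (e : Enode), e ≠ tx → S (w ++ [e]) = S w)
    (u : N → List E → List Enode)
    (hinit : ∀ n : N, u n [] = [name n])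
    (hstep : ∀ (n : N) (x : List E) (e : E),
      u n (x ++ [e]) = u n x ∨ ∃ e' : Enode, u n (x ++ [e]) = u n x ++ [e'])
    (hnospur : ∀ (n : N) (x : List E) (e : E) (m : Msg),
      u n (x ++ [e]) = u n x ++ [rx m] →
      ∃ n' : N, u n' (x ++ [e]) = u n' x ++ [tx] ∧ T (u n' x) = some m)
    (Id : List Enode → N)
    (hId : ∀ (n : N) (x : List E), Id (u n x) = n)
    (D : Set Msg) (ack : Msg → N → Msg)
    (hackT : ∀ (n : N) (x : List E) (d : Msg) (n' : N), d ∈ D →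
      T (u n x) = some (ack d n') →
      d ∈ R (u n x) ∧ (Id (u n x) = n' ∨ ack d n' ∈ R (u n x))) :
    ∀ (x : List E) (d : Msg) (n n' : N), d ∈ D →
      ack d n' ∈ R (u n x) → ack d n' ∈ S (u n' x) := by
  intro x
  induction x using List.reverseRecOn with
  | nil =>
    intro d n n' _ hr
    simp [R_u_nil hname_rx hR0 hRrx hRother hinit n] at hr
  | append_singleton x e ih =>
    intro d n n' hd hr
    have hmono := S_u_subset_append hStx hStxnull hSother hstep n' x e
    rcases mem_R_u_append_cases hRrx hRother hstep hnospur hr with hr | ⟨n'', hu, hT⟩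
    · exact hmono (ih d n n' hd hr)
    · rcases (hackT n'' x d n' hd hT).2 with hsender | hr''
      · rw [hId] at hsender
        subst hsender
        rw [hu, hStx _ _ hT]
        exact Set.mem_union_right _ rfl
      · exact hmono (ih d n'' n' hd hr'')

/-- **Receipt of an ack `a_{d,n'}` anywhere implies node `n'` sent it.** In the broadcast
network model (nodes `u n : E* → E_node*`, at most one node step per network step, no
spurious messages, received/sent sets `R`, `S`, each node knowing its own name via `Id`),
suppose `D ⊆ Messages` are data messages with unique acknowledgments `a_{d,n}`, and every
node satisfies the ack-transmit constraint: `T = a_{d,n}` implies `d ∈ R` and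
(`Id = n` or `a_{d,n} ∈ R`). Then for every network history `x`, `d ∈ D`, and nodes
`n, n'`: `a_{d,n'} ∈ R(u n x)` implies `a_{d,n'} ∈ S(u n' x)`. -/
theorem ack_received_implies_ack_sent {E Enode Msg N : Type*}
    (tx : Enode) (rx : Msg → Enode) (name : N → Enode)
    (hname_rx : ∀ (n : N) (m : Msg), name n ≠ rx m)
    (hname_tx : ∀ n : N, name n ≠ tx)
    (T : List Enode → Option Msg)
    (R S : List Enode → Set Msg)
    (hR0 : R [] = ∅) (hS0 : S [] = ∅)
    (hRrx : ∀ (w : List Enode) (m : Msg), R (w ++ [rx m]) = R w ∪ {m})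
    (hRother : ∀ (w : List Enode) (e : Enode), (∀ m : Msg, e ≠ rx m) → R (w ++ [e]) = R w)
    (hStx : ∀ (w : List Enode) (m : Msg), T w = some m → S (w ++ [tx]) = S w ∪ {m})
    (hStxnull : ∀ w : List Enode, T w = none → S (w ++ [tx]) = S w)
    (hSother : ∀ (w : List Enode) (e : Enode), e ≠ tx → S (w ++ [e]) = S w)
    (u : N → List E → List Enode)
    (hinit : ∀ n : N, u n [] = [name n])
    (hstep : ∀ (n : N) (x : List E) (e : E),
      u n (x ++ [e]) = u n x ∨ ∃ e' : Enode, u n (x ++ [e]) = u n x ++ [e'])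
    (hnospur : ∀ (n : N) (x : List E) (e : E) (m : Msg),
      u n (x ++ [e]) = u n x ++ [rx m] →
      ∃ n' : N, u n' (x ++ [e]) = u n' x ++ [tx] ∧ T (u n' x) = some m)
    (Id : List Enode → N)
    (hId : ∀ (n : N) (x : List E), Id (u n x) = n)
    (D : Set Msg) (ack : Msg → N → Msg)
    (hack_inj : ∀ (d₁ : Msg) (n₁ : N) (d₂ : Msg) (n₂ : N),
      ack d₁ n₁ = ack d₂ n₂ → d₁ = d₂ ∧ n₁ = n₂)
    (hackT : ∀ (n : N) (x : List E) (d : Msg) (n' : N), d ∈ D →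
      T (u n x) = some (ack d n') →
      d ∈ R (u n x) ∧ (Id (u n x) = n' ∨ ack d n' ∈ R (u n x))) :
    ∀ (x : List E) (d : Msg) (n n' : N), d ∈ D →
      ack d n' ∈ R (u n x) → ack d n' ∈ S (u n' x) :=
  ack_received_implies_ack_sent_general tx rx name hname_rx T R S hR0 hRrx hRother hStx hStxnull
    hSother u hinit hstep hnospur Id hId D ack hackT
end

section
/- In the broadcast network model with data messages D ⊆ Messages and unique acknowledgments a_{d,n} for d ∈ D and n ∈ N, assume every node satisfies the ack-transmit constraint: T = a_{d,n} implies d ∈ R and (Id = n or a_{d,n} ∈ R). Then for every network history x ∈ E*, every d ∈ D, and all nodes n, n' ∈ N: if a_{d,n'} ∈ R(u_n(x)) then d ∈ R(u_{n'}(x)). -/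
/-!
Induction on the network history `x`. An acknowledgment `a_{d,n'}` first enters `R(u_n)` by a
receive step; by the absence of spurious messages some node `n''` transmitted it in the same
network step, so by the ack-transmit constraint `d ∈ R(u_{n''})` and either `n'' = n'` or
`n''` had itself already received `a_{d,n'}`, which is the induction hypothesis. Received sets
only grow, so the conclusion survives every later step.
-/

section ReceivedSet

variable {Enode Msg : Type*} {rx : Msg → Enode} {R : List Enode → Set Msg}

theorem received_subset_append_singleton
    (hRrx : ∀ (w : List Enode) (m : Msg), R (w ++ [rx m]) = R w ∪ {m})
    (hRother : ∀ (w : List Enode) (e : Enode), (∀ m : Msg, e ≠ rx m) → R (w ++ [e]) = R w)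
    (w : List Enode) (e : Enode) : R w ⊆ R (w ++ [e]) := by
  by_cases he : ∃ m, e = rx m
  · obtain ⟨m, rfl⟩ := he
    rw [hRrx]
    exact Set.subset_union_left
  · rw [hRother w e fun m hm => he ⟨m, hm⟩]

theorem mem_received_or_eq_rx_of_mem_append_singleton
    (hRrx : ∀ (w : List Enode) (m : Msg), R (w ++ [rx m]) = R w ∪ {m})
    (hRother : ∀ (w : List Enode) (e : Enode), (∀ m : Msg, e ≠ rx m) → R (w ++ [e]) = R w)
    {w : List Enode} {e : Enode} {m : Msg} (h : m ∈ R (w ++ [e])) : m ∈ R w ∨ e = rx m := by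
  by_cases he : ∃ m', e = rx m'
  · obtain ⟨m', rfl⟩ := he
    rw [hRrx] at h
    rcases h with h | rfl
    exacts [Or.inl h, Or.inr rfl]
  · rw [hRother w e fun m' hm' => he ⟨m', hm'⟩] at h
    exact Or.inl h

variable {E N : Type*} {u : N → List E → List Enode}

theorem received_subset_step
    (hRrx : ∀ (w : List Enode) (m : Msg), R (w ++ [rx m]) = R w ∪ {m})
    (hRother : ∀ (w : List Enode) (e : Enode), (∀ m : Msg, e ≠ rx m) → R (w ++ [e]) = R w)
    (hstep : ∀ (n : N) (x : List E) (e : E),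
      u n (x ++ [e]) = u n x ∨ ∃ e' : Enode, u n (x ++ [e]) = u n x ++ [e'])
    (n : N) (x : List E) (e : E) : R (u n x) ⊆ R (u n (x ++ [e])) := by
  rcases hstep n x e with h | ⟨e', h⟩ <;> rw [h]
  exact received_subset_append_singleton hRrx hRother _ _

theorem mem_received_or_rx_step
    (hRrx : ∀ (w : List Enode) (m : Msg), R (w ++ [rx m]) = R w ∪ {m})
    (hRother : ∀ (w : List Enode) (e : Enode), (∀ m : Msg, e ≠ rx m) → R (w ++ [e]) = R w)
    (hstep : ∀ (n : N) (x : List E) (e : E),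
      u n (x ++ [e]) = u n x ∨ ∃ e' : Enode, u n (x ++ [e]) = u n x ++ [e'])
    {n : N} {x : List E} {e : E} {m : Msg} (h : m ∈ R (u n (x ++ [e]))) :
    m ∈ R (u n x) ∨ u n (x ++ [e]) = u n x ++ [rx m] := by
  rcases hstep n x e with hu | ⟨e', hu⟩ <;> rw [hu] at h ⊢
  · exact Or.inl h
  · rcases mem_received_or_eq_rx_of_mem_append_singleton hRrx hRother h with h | rfl
    exacts [Or.inl h, Or.inr rfl]

end ReceivedSet

theorem ack_received_implies_data_received_general {E Enode Msg N : Type*}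
    (tx : Enode) (rx : Msg → Enode) (name : N → Enode)
    (hname_rx : ∀ (n : N) (m : Msg), name n ≠ rx m)
    (T : List Enode → Option Msg)
    (R : List Enode → Set Msg)
    (hR0 : R [] = ∅)
    (hRrx : ∀ (w : List Enode) (m : Msg), R (w ++ [rx m]) = R w ∪ {m})
    (hRother : ∀ (w : List Enode) (e : Enode), (∀ m : Msg, e ≠ rx m) → R (w ++ [e]) = R w)
    (u : N → List E → List Enode)
    (hinit : ∀ n : N, u n [] = [name n])
    (hstep : ∀ (n : N) (x : List E) (e : E),
      u n (x ++ [e]) = u n x ∨ ∃ e' : Enode, u n (x ++ [e]) = u n x ++ [e'])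
    (hnospur : ∀ (n : N) (x : List E) (e : E) (m : Msg),
      u n (x ++ [e]) = u n x ++ [rx m] →
      ∃ n' : N, u n' (x ++ [e]) = u n' x ++ [tx] ∧ T (u n' x) = some m)
    (Id : List Enode → N)
    (hId : ∀ (n : N) (x : List E), Id (u n x) = n)
    (D : Set Msg) (ack : Msg → N → Msg)
    (hackT : ∀ (n : N) (x : List E) (d : Msg) (n' : N), d ∈ D →
      T (u n x) = some (ack d n') →
      d ∈ R (u n x) ∧ (Id (u n x) = n' ∨ ack d n' ∈ R (u n x))) :
    ∀ (x : List E) (d : Msg) (n n' : N), d ∈ D →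
      ack d n' ∈ R (u n x) → d ∈ R (u n' x) := by
  intro x
  induction x using List.reverseRecOn with
  | nil =>
    intro d n n' _ hack
    have hR_init : R [name n] = ∅ := by
      simpa [hR0] using hRother [] (name n) (hname_rx n)
    simp [hinit, hR_init] at hack
  | append_singleton x e ih =>
    intro d n n' hd hack
    have grow := received_subset_step hRrx hRother hstep n' x e
    rcases mem_received_or_rx_step hRrx hRother hstep hack with hold | hrx
    · exact grow (ih d n n' hd hold)
    obtain ⟨n'', -, hT⟩ := hnospur n x e _ hrx
    obtain ⟨hdR, hself | hack''⟩ := hackT n'' x d n' hd hT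
    · rw [hId] at hself
      subst hself
      exact grow hdR
    · exact grow (ih d n'' n' hd hack'')

/-- **Lemma 2: receipt of an acknowledgment `a_{d,n'}` anywhere implies node `n'` received
`d`.** In the broadcast network model (nodes `u n : E* → E_node*`, at most one node step
per network step, no spurious messages, received/sent sets `R`, `S`, each node knowing its
own name via `Id`), suppose `D ⊆ Messages` are data messages with unique acknowledgments
`a_{d,n}`, and every node satisfies the ack-transmit constraint: `T = a_{d,n}` implies
`d ∈ R` and (`Id = n` or `a_{d,n} ∈ R`). Then for every network history `x`, `d ∈ D`, and
nodes `n, n'`: `a_{d,n'} ∈ R(u n x)` implies `d ∈ R(u n' x)`. -/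
theorem ack_received_implies_data_received {E Enode Msg N : Type*}
    (tx : Enode) (rx : Msg → Enode) (name : N → Enode)
    (hname_rx : ∀ (n : N) (m : Msg), name n ≠ rx m)
    (hname_tx : ∀ n : N, name n ≠ tx)
    (T : List Enode → Option Msg)
    (R S : List Enode → Set Msg)
    (hR0 : R [] = ∅) (hS0 : S [] = ∅)
    (hRrx : ∀ (w : List Enode) (m : Msg), R (w ++ [rx m]) = R w ∪ {m})
    (hRother : ∀ (w : List Enode) (e : Enode), (∀ m : Msg, e ≠ rx m) → R (w ++ [e]) = R w)
    (hStx : ∀ (w : List Enode) (m : Msg), T w = some m → S (w ++ [tx]) = S w ∪ {m})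
    (hStxnull : ∀ w : List Enode, T w = none → S (w ++ [tx]) = S w)
    (hSother : ∀ (w : List Enode) (e : Enode), e ≠ tx → S (w ++ [e]) = S w)
    (u : N → List E → List Enode)
    (hinit : ∀ n : N, u n [] = [name n])
    (hstep : ∀ (n : N) (x : List E) (e : E),
      u n (x ++ [e]) = u n x ∨ ∃ e' : Enode, u n (x ++ [e]) = u n x ++ [e'])
    (hnospur : ∀ (n : N) (x : List E) (e : E) (m : Msg),
      u n (x ++ [e]) = u n x ++ [rx m] →
      ∃ n' : N, u n' (x ++ [e]) = u n' x ++ [tx] ∧ T (u n' x) = some m)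
    (Id : List Enode → N)
    (hId : ∀ (n : N) (x : List E), Id (u n x) = n)
    (D : Set Msg) (ack : Msg → N → Msg)
    (hack_inj : ∀ (d₁ : Msg) (n₁ : N) (d₂ : Msg) (n₂ : N),
      ack d₁ n₁ = ack d₂ n₂ → d₁ = d₂ ∧ n₁ = n₂)
    (hackT : ∀ (n : N) (x : List E) (d : Msg) (n' : N), d ∈ D →
      T (u n x) = some (ack d n') →
      d ∈ R (u n x) ∧ (Id (u n x) = n' ∨ ack d n' ∈ R (u n x))) :
    ∀ (x : List E) (d : Msg) (n n' : N), d ∈ D →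
      ack d n' ∈ R (u n x) → d ∈ R (u n' x) :=
  ack_received_implies_data_received_general tx rx name hname_rx T R hR0 hRrx hRother u hinit hstep
    hnospur Id hId D ack hackT
end

section
/- In the broadcast network model with data messages D ⊆ Messages and unique acknowledgments a_{d,n} for d ∈ D and n ∈ N, assume every node satisfies the ack-transmit constraint: T = a_{d,n} implies d ∈ R and (Id = n or a_{d,n} ∈ R). Fix a group G ⊆ N and define for each node the boolean state variable Commit(G, d) = 1 if and only if a_{d,n} ∈ R for all n ∈ G. Then for every network history x ∈ E*, every node n ∈ N, and every d ∈ D: if Commit(G, d) holds at node n (i.e., a_{d,n'} ∈ R(u_n(x)) for all n' ∈ G), then every node n' ∈ G has received d, i.e., d ∈ R(u_{n'}(x)) for all n' ∈ G. -/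
/-! Every acknowledgment `a_{d,n'}` that appears anywhere in the network certifies that `n'`
already holds `d`: the first node to hold `a_{d,n'}` received it from a transmitter, which by
the ack-transmit constraint held `d` and was either `n'` itself or already held `a_{d,n'}`.
Since received sets only grow, this invariant survives every network step, and applying it
to each `a_{d,n'}` with `n' ∈ G` gives the theorem. -/

namespace BroadcastNetwork

variable {E Enode Msg N : Type*} {rx : Msg → Enode} {R : List Enode → Set Msg}

theorem received_singleton_eq_empty (hR0 : R [] = ∅)
    (hRother : ∀ (w : List Enode) (e : Enode), (∀ m : Msg, e ≠ rx m) → R (w ++ [e]) = R w)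
    {e : Enode} (he : ∀ m : Msg, e ≠ rx m) : R [e] = ∅ :=
  (hRother [] e he).trans hR0

theorem received_subset_append_singleton
    (hRrx : ∀ (w : List Enode) (m : Msg), R (w ++ [rx m]) = R w ∪ {m})
    (hRother : ∀ (w : List Enode) (e : Enode), (∀ m : Msg, e ≠ rx m) → R (w ++ [e]) = R w)
    (w : List Enode) (e : Enode) : R w ⊆ R (w ++ [e]) := by
  by_cases he : ∃ m, e = rx m
  · obtain ⟨m, rfl⟩ := he
    rw [hRrx]
    exact Set.subset_union_left
  · push Not at he
    rw [hRother w e he]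

theorem mem_received_append_singleton
    (hRrx : ∀ (w : List Enode) (m : Msg), R (w ++ [rx m]) = R w ∪ {m})
    (hRother : ∀ (w : List Enode) (e : Enode), (∀ m : Msg, e ≠ rx m) → R (w ++ [e]) = R w)
    {w : List Enode} {e : Enode} {m : Msg} (hm : m ∈ R (w ++ [e])) : m ∈ R w ∨ e = rx m := by
  by_cases he : ∃ m', e = rx m'
  · obtain ⟨m', rfl⟩ := he
    rw [hRrx] at hm
    rcases hm with hm | rfl
    exacts [Or.inl hm, Or.inr rfl]
  · push Not at he
    rw [hRother w e he] at hm
    exact Or.inl hm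

variable {u : N → List E → List Enode}

theorem received_subset_step
    (hRrx : ∀ (w : List Enode) (m : Msg), R (w ++ [rx m]) = R w ∪ {m})
    (hRother : ∀ (w : List Enode) (e : Enode), (∀ m : Msg, e ≠ rx m) → R (w ++ [e]) = R w)
    (hstep : ∀ (n : N) (x : List E) (e : E),
      u n (x ++ [e]) = u n x ∨ ∃ e' : Enode, u n (x ++ [e]) = u n x ++ [e'])
    (n : N) (x : List E) (e : E) : R (u n x) ⊆ R (u n (x ++ [e])) := by
  rcases hstep n x e with h | ⟨e', h⟩
  · rw [h]
  · rw [h]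
    exact received_subset_append_singleton hRrx hRother _ e'

theorem mem_received_step
    (hRrx : ∀ (w : List Enode) (m : Msg), R (w ++ [rx m]) = R w ∪ {m})
    (hRother : ∀ (w : List Enode) (e : Enode), (∀ m : Msg, e ≠ rx m) → R (w ++ [e]) = R w)
    (hstep : ∀ (n : N) (x : List E) (e : E),
      u n (x ++ [e]) = u n x ∨ ∃ e' : Enode, u n (x ++ [e]) = u n x ++ [e'])
    {n : N} {x : List E} {e : E} {m : Msg} (hm : m ∈ R (u n (x ++ [e]))) :
    m ∈ R (u n x) ∨ u n (x ++ [e]) = u n x ++ [rx m] := by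
  rcases hstep n x e with h | ⟨e', h⟩
  · rw [h] at hm
    exact Or.inl hm
  · rw [h] at hm ⊢
    rcases mem_received_append_singleton hRrx hRother hm with hm | rfl
    exacts [Or.inl hm, Or.inr rfl]

theorem mem_received_of_ack_mem_received {tx : Enode} {name : N → Enode}
    (hname_rx : ∀ (n : N) (m : Msg), name n ≠ rx m)
    {T : List Enode → Option Msg} (hR0 : R [] = ∅)
    (hRrx : ∀ (w : List Enode) (m : Msg), R (w ++ [rx m]) = R w ∪ {m})
    (hRother : ∀ (w : List Enode) (e : Enode), (∀ m : Msg, e ≠ rx m) → R (w ++ [e]) = R w)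
    (hinit : ∀ n : N, u n [] = [name n])
    (hstep : ∀ (n : N) (x : List E) (e : E),
      u n (x ++ [e]) = u n x ∨ ∃ e' : Enode, u n (x ++ [e]) = u n x ++ [e'])
    (hnospur : ∀ (n : N) (x : List E) (e : E) (m : Msg),
      u n (x ++ [e]) = u n x ++ [rx m] →
      ∃ n' : N, u n' (x ++ [e]) = u n' x ++ [tx] ∧ T (u n' x) = some m)
    {Id : List Enode → N} (hId : ∀ (n : N) (x : List E), Id (u n x) = n)
    {D : Set Msg} {ack : Msg → N → Msg}
    (hackT : ∀ (n : N) (x : List E) (d : Msg) (n' : N), d ∈ D →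
      T (u n x) = some (ack d n') →
      d ∈ R (u n x) ∧ (Id (u n x) = n' ∨ ack d n' ∈ R (u n x)))
    {d : Msg} (hd : d ∈ D) (x : List E) :
    ∀ n n' : N, ack d n' ∈ R (u n x) → d ∈ R (u n' x) := by
  induction x using List.reverseRecOn with
  | nil =>
    intro n n' hack
    rw [hinit, received_singleton_eq_empty hR0 hRother (hname_rx n)] at hack
    exact absurd hack (Set.notMem_empty _)
  | append_singleton x e ih =>
    intro n n' hack
    have grow := received_subset_step hRrx hRother hstep
    rcases mem_received_step hRrx hRother hstep hack with hack | hrx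
    · exact grow n' x e (ih n n' hack)
    · obtain ⟨n₀, -, hT⟩ := hnospur n x e _ hrx
      obtain ⟨hd₀, rfl | hack₀⟩ := hackT n₀ x d n' hd hT
      · rw [hId]
        exact grow n₀ x e hd₀
      · exact grow n' x e (ih n₀ n' hack₀)

end BroadcastNetwork

open BroadcastNetwork in
theorem commit_implies_group_received_general {E Enode Msg N : Type*}
    (tx : Enode) (rx : Msg → Enode) (name : N → Enode)
    (hname_rx : ∀ (n : N) (m : Msg), name n ≠ rx m)
    (T : List Enode → Option Msg)
    (R : List Enode → Set Msg)
    (hR0 : R [] = ∅)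
    (hRrx : ∀ (w : List Enode) (m : Msg), R (w ++ [rx m]) = R w ∪ {m})
    (hRother : ∀ (w : List Enode) (e : Enode), (∀ m : Msg, e ≠ rx m) → R (w ++ [e]) = R w)
    (u : N → List E → List Enode)
    (hinit : ∀ n : N, u n [] = [name n])
    (hstep : ∀ (n : N) (x : List E) (e : E),
      u n (x ++ [e]) = u n x ∨ ∃ e' : Enode, u n (x ++ [e]) = u n x ++ [e'])
    (hnospur : ∀ (n : N) (x : List E) (e : E) (m : Msg),
      u n (x ++ [e]) = u n x ++ [rx m] →
      ∃ n' : N, u n' (x ++ [e]) = u n' x ++ [tx] ∧ T (u n' x) = some m)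
    (Id : List Enode → N)
    (hId : ∀ (n : N) (x : List E), Id (u n x) = n)
    (D : Set Msg) (ack : Msg → N → Msg)
    (hackT : ∀ (n : N) (x : List E) (d : Msg) (n' : N), d ∈ D →
      T (u n x) = some (ack d n') →
      d ∈ R (u n x) ∧ (Id (u n x) = n' ∨ ack d n' ∈ R (u n x))) :
    ∀ (G : Set N) (x : List E) (n : N) (d : Msg), d ∈ D →
      (∀ n' ∈ G, ack d n' ∈ R (u n x)) → ∀ n' ∈ G, d ∈ R (u n' x) :=
  fun _ x n _ hd hcommit n' hn' =>
    mem_received_of_ack_mem_received hname_rx hR0 hRrx hRother hinit hstep hnospur hId hackT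
      hd x n n' (hcommit n' hn')

/-- **Commit correctness.** In the broadcast network model (nodes `u n : E* → E_node*`, at
most one node step per network step, no spurious messages, received/sent sets `R`, `S`,
each node knowing its own name via `Id`), with data messages `D ⊆ Messages`, unique
acknowledgments `a_{d,n}`, and the ack-transmit constraint (`T = a_{d,n}` implies `d ∈ R`
and (`Id = n` or `a_{d,n} ∈ R`)): fix a group `G ⊆ N` and say `Commit(G,d)` holds at a
node iff `a_{d,n'} ∈ R` for all `n' ∈ G`. Then for every network history `x`, node `n`,
and `d ∈ D`: if `Commit(G,d)` holds at node `n`, then every `n' ∈ G` has received `d`,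
i.e. `d ∈ R(u n' x)` for all `n' ∈ G`. -/
theorem commit_implies_group_received {E Enode Msg N : Type*}
    (tx : Enode) (rx : Msg → Enode) (name : N → Enode)
    (hname_rx : ∀ (n : N) (m : Msg), name n ≠ rx m)
    (hname_tx : ∀ n : N, name n ≠ tx)
    (T : List Enode → Option Msg)
    (R S : List Enode → Set Msg)
    (hR0 : R [] = ∅) (hS0 : S [] = ∅)
    (hRrx : ∀ (w : List Enode) (m : Msg), R (w ++ [rx m]) = R w ∪ {m})
    (hRother : ∀ (w : List Enode) (e : Enode), (∀ m : Msg, e ≠ rx m) → R (w ++ [e]) = R w)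
    (hStx : ∀ (w : List Enode) (m : Msg), T w = some m → S (w ++ [tx]) = S w ∪ {m})
    (hStxnull : ∀ w : List Enode, T w = none → S (w ++ [tx]) = S w)
    (hSother : ∀ (w : List Enode) (e : Enode), e ≠ tx → S (w ++ [e]) = S w)
    (u : N → List E → List Enode)
    (hinit : ∀ n : N, u n [] = [name n])
    (hstep : ∀ (n : N) (x : List E) (e : E),
      u n (x ++ [e]) = u n x ∨ ∃ e' : Enode, u n (x ++ [e]) = u n x ++ [e'])
    (hnospur : ∀ (n : N) (x : List E) (e : E) (m : Msg),
      u n (x ++ [e]) = u n x ++ [rx m] →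
      ∃ n' : N, u n' (x ++ [e]) = u n' x ++ [tx] ∧ T (u n' x) = some m)
    (Id : List Enode → N)
    (hId : ∀ (n : N) (x : List E), Id (u n x) = n)
    (D : Set Msg) (ack : Msg → N → Msg)
    (hack_inj : ∀ (d₁ : Msg) (n₁ : N) (d₂ : Msg) (n₂ : N),
      ack d₁ n₁ = ack d₂ n₂ → d₁ = d₂ ∧ n₁ = n₂)
    (hackT : ∀ (n : N) (x : List E) (d : Msg) (n' : N), d ∈ D →
      T (u n x) = some (ack d n') →
      d ∈ R (u n x) ∧ (Id (u n x) = n' ∨ ack d n' ∈ R (u n x))) :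
    ∀ (G : Set N) (x : List E) (n : N) (d : Msg), d ∈ D →
      (∀ n' ∈ G, ack d n' ∈ R (u n x)) → ∀ n' ∈ G, d ∈ R (u n' x) :=
  commit_implies_group_received_general tx rx name hname_rx T R hR0 hRrx hRother u hinit hstep
    hnospur Id hId D ack hackT
end

section
/- In the broadcast network model, consider the cyclic-acknowledgment protocol for a group G ⊆ N with |G| = k and a surjection π : {0, …, k−1} → G. Messages carry sequence numbers: data message d_i and acknowledgment a_i share sequence number i. Assume: (1) sequence numbers uniquely identify sent data messages: if d_i ∈ S(u_{n₁}(x)) and d'_i ∈ S(u_{n₂}(x)) then d'_i = d_i; (2) a node transmits an ack a_i only if π(i mod k) = Id or a_i ∈ R; (3) a node transmits a_i only if d_i ∈ R and for all j < i there exist a_j, d_j with a_j ∈ R and d_j ∈ R. Then for every network history x ∈ E* and every node n: if a_{i+k} ∈ R(u_n(x)), then there is a complete cycle of nodes in G that have received d_i; in particular every node n' ∈ G satisfies d_i ∈ R(u_{n'}(x)). -/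
/-!
Since there are no spurious messages, every received message was queued for transmission at a
strictly earlier point of the history, and in particular was sent. Following resends back in
time, a received ack `a J` was therefore first transmitted by its owner `π (J mod k)`, who by (3)
had by then received a data message numbered `i` for every `i ≤ J`. A node that transmitted
`a (i + k)` had received `a i, …, a (i + k - 1)`, whose owners exhaust `G`; so every member of `G`
received a data message numbered `i`, and by (1) these are all the same message.
-/

theorem List.IsPrefix.apply_le_apply {α β : Type*} [Preorder β] {F : List α → β}
    (hF : ∀ w e, F w ≤ F (w ++ [e])) {w w' : List α} (h : w <+: w') : F w ≤ F w' := by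
  obtain ⟨t, rfl⟩ := h
  induction t using List.reverseRecOn with
  | nil => simp
  | append_singleton t e ih => simpa only [← List.append_assoc] using ih.trans (hF (w ++ t) e)

theorem Nat.exists_mod_eq_of_lt {j k : ℕ} (hj : j < k) (i : ℕ) :
    ∃ J, i ≤ J ∧ J < i + k ∧ J % k = j := by
  have hk : 0 < k := by omega
  refine ⟨i + (j + k - i % k) % k, by omega, by have := Nat.mod_lt (j + k - i % k) hk; omega, ?_⟩
  have hi : i + (j + k - i % k) = j + k + k * (i / k) := by
    have := Nat.mod_add_div i k; have := Nat.mod_lt i hk; omega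
  rw [Nat.add_mod_mod, hi, Nat.add_mul_mod_self_left, Nat.add_mod_right, Nat.mod_eq_of_lt hj]

section BroadcastNetwork

variable {E Enode Msg N : Type*} {tx : Enode} {rx : Msg → Enode} {T : List Enode → Option Msg}
  {R S : List Enode → Set Msg} {u : N → List E → List Enode}

theorem recv_subset_recv_append (hRrx : ∀ w m, R (w ++ [rx m]) = R w ∪ {m})
    (hRother : ∀ w e, (∀ m, e ≠ rx m) → R (w ++ [e]) = R w) (w : List Enode) (e : Enode) :
    R w ⊆ R (w ++ [e]) := by
  by_cases he : ∃ m, e = rx m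
  · obtain ⟨m, rfl⟩ := he
    rw [hRrx]
    exact Set.subset_union_left
  · rw [hRother w e fun m hm => he ⟨m, hm⟩]

theorem sent_subset_sent_append (hStx : ∀ w m, T w = some m → S (w ++ [tx]) = S w ∪ {m})
    (hStxnull : ∀ w, T w = none → S (w ++ [tx]) = S w)
    (hSother : ∀ w e, e ≠ tx → S (w ++ [e]) = S w) (w : List Enode) (e : Enode) :
    S w ⊆ S (w ++ [e]) := by
  by_cases he : e = tx
  · subst he
    cases hT : T w with
    | none => rw [hStxnull w hT]
    | some m =>
      rw [hStx w m hT]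
      exact Set.subset_union_left
  · rw [hSother w e he]

theorem apply_history_subset_of_prefix
    (hstep : ∀ n x e, u n (x ++ [e]) = u n x ∨ ∃ e', u n (x ++ [e]) = u n x ++ [e'])
    {F : List Enode → Set Msg} (hF : ∀ w e, F w ⊆ F (w ++ [e])) (n : N) {x y : List E}
    (h : x <+: y) : F (u n x) ⊆ F (u n y) := by
  refine h.apply_le_apply (F := fun x => F (u n x)) fun x e => ?_
  rcases hstep n x e with h | ⟨e', h⟩ <;> rw [h]
  exact hF _ _

theorem exists_transmit_of_mem_recv {name : N → Enode} (hR0 : R [] = ∅)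
    (hRrx : ∀ w m, R (w ++ [rx m]) = R w ∪ {m})
    (hRother : ∀ w e, (∀ m, e ≠ rx m) → R (w ++ [e]) = R w)
    (hinit : ∀ n, u n [] = [name n]) (hname_rx : ∀ n m, name n ≠ rx m)
    (hstep : ∀ n x e, u n (x ++ [e]) = u n x ∨ ∃ e', u n (x ++ [e]) = u n x ++ [e'])
    (hnospur : ∀ n x e m, u n (x ++ [e]) = u n x ++ [rx m] →
      ∃ n', u n' (x ++ [e]) = u n' x ++ [tx] ∧ T (u n' x) = some m)
    {n : N} {x : List E} {m : Msg} (hm : m ∈ R (u n x)) :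
    ∃ n' x' e, x' ++ [e] <+: x ∧ T (u n' x') = some m ∧ u n' (x' ++ [e]) = u n' x' ++ [tx] := by
  induction x using List.reverseRecOn with
  | nil =>
    rw [hinit, ← List.nil_append [name n], hRother _ _ (hname_rx n), hR0] at hm
    exact hm.elim
  | append_singleton x e ih =>
    have extend : m ∈ R (u n x) → ∃ n' x' e', x' ++ [e'] <+: x ++ [e] ∧
        T (u n' x') = some m ∧ u n' (x' ++ [e']) = u n' x' ++ [tx] := fun hm =>
      let ⟨n', x', e', hpre, hT, hu⟩ := ih hm
      ⟨n', x', e', hpre.trans (List.prefix_append x [e]), hT, hu⟩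
    rcases hstep n x e with h | ⟨e', h⟩
    · exact extend (h ▸ hm)
    by_cases he : ∃ m', e' = rx m'
    · obtain ⟨m', rfl⟩ := he
      rw [h, hRrx] at hm
      rcases hm with hm | rfl
      · exact extend hm
      · obtain ⟨n', hu, hT⟩ := hnospur n x e m h
        exact ⟨n', x, e, List.prefix_rfl, hT, hu⟩
    · rw [h, hRother _ _ fun m' hm' => he ⟨m', hm'⟩] at hm
      exact extend hm

theorem mem_sent_of_transmit (hStx : ∀ w m, T w = some m → S (w ++ [tx]) = S w ∪ {m})
    (hStxnull : ∀ w, T w = none → S (w ++ [tx]) = S w)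
    (hSother : ∀ w e, e ≠ tx → S (w ++ [e]) = S w)
    (hstep : ∀ n x e, u n (x ++ [e]) = u n x ∨ ∃ e', u n (x ++ [e]) = u n x ++ [e'])
    {n : N} {x x' : List E} {e : E} {m : Msg} (hpre : x' ++ [e] <+: x)
    (hT : T (u n x') = some m) (hu : u n (x' ++ [e]) = u n x' ++ [tx]) : m ∈ S (u n x) := by
  refine apply_history_subset_of_prefix hstep (sent_subset_sent_append hStx hStxnull hSother) n
    hpre ?_
  rw [hu, hStx _ _ hT]
  exact Set.mem_union_right _ rfl

theorem exists_transmit_by_of_mem_recv {m : Msg} (o : N)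
    (hsrc : ∀ {n x}, m ∈ R (u n x) → ∃ n' x' e, x' ++ [e] <+: x ∧ T (u n' x') = some m)
    (hfresh : ∀ n x, T (u n x) = some m → o = n ∨ m ∈ R (u n x))
    {n : N} {x : List E} (hm : m ∈ R (u n x)) : ∃ x', x' <+: x ∧ T (u o x') = some m := by
  induction hx : x.length using Nat.strong_induction_on generalizing n x with
  | _ L ih =>
  obtain ⟨n', x', e, hpre, hT⟩ := hsrc hm
  have hx' : x' <+: x := (List.prefix_append x' [e]).trans hpre
  rcases hfresh n' x' hT with rfl | hm'
  · exact ⟨x', hx', hT⟩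
  · have hlen : x'.length < L := by
      have := hpre.length_le
      simp only [List.length_append, List.length_singleton] at this
      omega
    obtain ⟨x'', hx'', hT'⟩ := ih _ hlen hm' rfl
    exact ⟨x'', hx''.trans hx', hT'⟩

theorem forall_mem_recv_data_of_mem_recv_acks {G : Finset N} {k : ℕ} (hkpos : 0 < k)
    {π : Fin k → N} (hπsurj : ∀ n ∈ G, ∃ j : Fin k, π j = n)
    {D : Set Msg} {num : Msg → ℕ} {a : ℕ → Msg} {Id : List Enode → N}
    (hsrc : ∀ {n x m}, m ∈ R (u n x) → ∃ n' x' e, x' ++ [e] <+: x ∧ T (u n' x') = some m)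
    (hRmono : ∀ n {x y : List E}, x <+: y → R (u n x) ⊆ R (u n y))
    (hId : ∀ n x, Id (u n x) = n)
    (hturn : ∀ n x i, T (u n x) = some (a i) →
      π ⟨i % k, Nat.mod_lt i hkpos⟩ = Id (u n x) ∨ a i ∈ R (u n x))
    (hall : ∀ n x i, T (u n x) = some (a i) →
      (∃ d ∈ D, num d = i ∧ d ∈ R (u n x)) ∧
      ∀ j < i, a j ∈ R (u n x) ∧ ∃ d ∈ D, num d = j ∧ d ∈ R (u n x))
    {n : N} {x : List E} {i : ℕ} (hacks : ∀ J, i ≤ J → J < i + k → a J ∈ R (u n x)) :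
    ∀ n' ∈ G, ∃ d ∈ D, num d = i ∧ d ∈ R (u n' x) := by
  intro n' hn'
  obtain ⟨j, rfl⟩ := hπsurj n' hn'
  obtain ⟨J, hiJ, hJ, hJj⟩ := Nat.exists_mod_eq_of_lt j.isLt i
  obtain ⟨x', hx', hT⟩ := exists_transmit_by_of_mem_recv _ hsrc
    (fun n x hT => (hturn n x J hT).imp_left (·.trans (hId n x))) (hacks J hiJ hJ)
  rw [show (⟨J % k, _⟩ : Fin k) = j from Fin.ext hJj] at hT
  have hdata : ∃ d ∈ D, num d = i ∧ d ∈ R (u (π j) x') := by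
    rcases hiJ.eq_or_lt with rfl | hlt
    · exact (hall _ _ _ hT).1
    · exact ((hall _ _ _ hT).2 i hlt).2
  obtain ⟨d, hdD, hdi, hd⟩ := hdata
  exact ⟨d, hdD, hdi, hRmono _ hx' hd⟩

end BroadcastNetwork

theorem cyclic_ack_protocol_general {E Enode Msg N : Type*}
    (tx : Enode) (rx : Msg → Enode) (name : N → Enode)
    (hname_rx : ∀ (n : N) (m : Msg), name n ≠ rx m)
    (T : List Enode → Option Msg)
    (R S : List Enode → Set Msg)
    (hR0 : R [] = ∅)
    (hRrx : ∀ (w : List Enode) (m : Msg), R (w ++ [rx m]) = R w ∪ {m})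
    (hRother : ∀ (w : List Enode) (e : Enode), (∀ m : Msg, e ≠ rx m) → R (w ++ [e]) = R w)
    (hStx : ∀ (w : List Enode) (m : Msg), T w = some m → S (w ++ [tx]) = S w ∪ {m})
    (hStxnull : ∀ w : List Enode, T w = none → S (w ++ [tx]) = S w)
    (hSother : ∀ (w : List Enode) (e : Enode), e ≠ tx → S (w ++ [e]) = S w)
    (u : N → List E → List Enode)
    (hinit : ∀ n : N, u n [] = [name n])
    (hstep : ∀ (n : N) (x : List E) (e : E),
      u n (x ++ [e]) = u n x ∨ ∃ e' : Enode, u n (x ++ [e]) = u n x ++ [e'])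
    (hnospur : ∀ (n : N) (x : List E) (e : E) (m : Msg),
      u n (x ++ [e]) = u n x ++ [rx m] →
      ∃ n' : N, u n' (x ++ [e]) = u n' x ++ [tx] ∧ T (u n' x) = some m)
    (Id : List Enode → N)
    (hId : ∀ (n : N) (x : List E), Id (u n x) = n)
    -- the group, its size, and the cyclic turn assignment
    (G : Finset N) (k : ℕ) (hkpos : 0 < k)
    (π : Fin k → N)
    (hπsurj : ∀ n ∈ G, ∃ j : Fin k, π j = n)
    -- data messages `D` with sequence numbers `num`, and acks `a i` with sequence number `i`
    (D : Set Msg) (num : Msg → ℕ) (a : ℕ → Msg)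
    -- (1) sequence numbers of sent data messages are uniquely identifying
    (huniq : ∀ (x : List E) (n₁ n₂ : N) (d d' : Msg), d ∈ D → d' ∈ D → num d = num d' →
      d ∈ S (u n₁ x) → d' ∈ S (u n₂ x) → d' = d)
    -- (2) a node transmits an ack `a i` only if it is its turn or it is resending
    (hturn : ∀ (n : N) (x : List E) (i : ℕ), T (u n x) = some (a i) →
      π ⟨i % k, Nat.mod_lt i hkpos⟩ = Id (u n x) ∨ a i ∈ R (u n x))
    -- (3) acks are only sent if all previous data messages and acks have been received
    (hall : ∀ (n : N) (x : List E) (i : ℕ), T (u n x) = some (a i) →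
      (∃ d ∈ D, num d = i ∧ d ∈ R (u n x)) ∧
      ∀ j < i, a j ∈ R (u n x) ∧ ∃ d ∈ D, num d = j ∧ d ∈ R (u n x)) :
    ∀ (x : List E) (n : N) (i : ℕ), a (i + k) ∈ R (u n x) →
      ∃ d ∈ D, num d = i ∧ ∀ n' ∈ G, d ∈ R (u n' x) := by
  have hRmono : ∀ n {x y : List E}, x <+: y → R (u n x) ⊆ R (u n y) :=
    apply_history_subset_of_prefix hstep (recv_subset_recv_append hRrx hRother)
  have hsrc {n x m} (hm : m ∈ R (u n x)) :=
    exists_transmit_of_mem_recv hR0 hRrx hRother hinit hname_rx hstep hnospur hm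
  have hsent {n x m} (hm : m ∈ R (u n x)) : ∃ n', m ∈ S (u n' x) :=
    let ⟨n', _, _, hpre, hT, hu⟩ := hsrc hm
    ⟨n', mem_sent_of_transmit hStx hStxnull hSother hstep hpre hT hu⟩
  intro x n i hack
  obtain ⟨n₁, x₁, e₁, hx₁, hT₁, -⟩ := hsrc hack
  have hx₁' : x₁ <+: x := (List.prefix_append x₁ [e₁]).trans hx₁
  have hprev := (hall n₁ x₁ (i + k) hT₁).2
  obtain ⟨d, hdD, hdi, hd⟩ := (hprev i (by omega)).2
  refine ⟨d, hdD, hdi, fun n' hn' => ?_⟩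
  obtain ⟨d', hd'D, hd'i, hd'⟩ := forall_mem_recv_data_of_mem_recv_acks hkpos hπsurj
    (fun hm => let ⟨n', x', e, hpre, hT, _⟩ := hsrc hm; ⟨n', x', e, hpre, hT⟩) hRmono hId hturn
    hall (fun J _ hJ => hRmono n₁ hx₁' (hprev J hJ).1) n' hn'
  obtain ⟨m₁, hm₁⟩ := hsent (hRmono n₁ hx₁' hd)
  obtain ⟨m₂, hm₂⟩ := hsent hd'
  rwa [huniq x m₁ m₂ d d' hdD hd'D (hdi.trans hd'i.symm) hm₁ hm₂] at hd'

/-- **Cyclic-acknowledgment protocol.** In the broadcast network model (nodes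
`u n : E* → E_node*`, at most one node step per network step, no spurious messages,
received/sent sets `R`, `S`, each node knowing its own name via `Id`), fix a group
`G ⊆ N` with `|G| = k > 0` and a surjection `π : {0,…,k−1} → G`. Data messages (`d ∈ D`,
with sequence number `num d`) and acknowledgments (`a i`, with sequence number `i`) carry
sequence numbers. Assume: (1) sequence numbers uniquely identify sent data messages;
(2) a node transmits `a i` only if `π(i mod k) = Id` or `a i ∈ R`; (3) a node transmits
`a i` only if some data message numbered `i` is in `R` and, for every `j < i`, `a j ∈ R`
and some data message numbered `j` is in `R`. Then for every network history `x` and node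
`n`: if `a (i+k) ∈ R(u n x)` then there is a complete cycle of nodes in `G` that received
the data message `d_i` numbered `i`; in particular every `n' ∈ G` has `d_i ∈ R(u n' x)`. -/
theorem cyclic_ack_protocol {E Enode Msg N : Type*}
    (tx : Enode) (rx : Msg → Enode) (name : N → Enode)
    (hname_rx : ∀ (n : N) (m : Msg), name n ≠ rx m)
    (hname_tx : ∀ n : N, name n ≠ tx)
    (T : List Enode → Option Msg)
    (R S : List Enode → Set Msg)
    (hR0 : R [] = ∅) (hS0 : S [] = ∅)
    (hRrx : ∀ (w : List Enode) (m : Msg), R (w ++ [rx m]) = R w ∪ {m})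
    (hRother : ∀ (w : List Enode) (e : Enode), (∀ m : Msg, e ≠ rx m) → R (w ++ [e]) = R w)
    (hStx : ∀ (w : List Enode) (m : Msg), T w = some m → S (w ++ [tx]) = S w ∪ {m})
    (hStxnull : ∀ w : List Enode, T w = none → S (w ++ [tx]) = S w)
    (hSother : ∀ (w : List Enode) (e : Enode), e ≠ tx → S (w ++ [e]) = S w)
    (u : N → List E → List Enode)
    (hinit : ∀ n : N, u n [] = [name n])
    (hstep : ∀ (n : N) (x : List E) (e : E),
      u n (x ++ [e]) = u n x ∨ ∃ e' : Enode, u n (x ++ [e]) = u n x ++ [e'])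
    (hnospur : ∀ (n : N) (x : List E) (e : E) (m : Msg),
      u n (x ++ [e]) = u n x ++ [rx m] →
      ∃ n' : N, u n' (x ++ [e]) = u n' x ++ [tx] ∧ T (u n' x) = some m)
    (Id : List Enode → N)
    (hId : ∀ (n : N) (x : List E), Id (u n x) = n)
    -- the group, its size, and the cyclic turn assignment
    (G : Finset N) (k : ℕ) (hk : G.card = k) (hkpos : 0 < k)
    (π : Fin k → N)
    (hπmem : ∀ j : Fin k, π j ∈ G)
    (hπsurj : ∀ n ∈ G, ∃ j : Fin k, π j = n)
    -- data messages `D` with sequence numbers `num`, and acks `a i` with sequence number `i`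
    (D : Set Msg) (num : Msg → ℕ) (a : ℕ → Msg)
    -- (1) sequence numbers of sent data messages are uniquely identifying
    (huniq : ∀ (x : List E) (n₁ n₂ : N) (d d' : Msg), d ∈ D → d' ∈ D → num d = num d' →
      d ∈ S (u n₁ x) → d' ∈ S (u n₂ x) → d' = d)
    -- (2) a node transmits an ack `a i` only if it is its turn or it is resending
    (hturn : ∀ (n : N) (x : List E) (i : ℕ), T (u n x) = some (a i) →
      π ⟨i % k, Nat.mod_lt i hkpos⟩ = Id (u n x) ∨ a i ∈ R (u n x))
    -- (3) acks are only sent if all previous data messages and acks have been received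
    (hall : ∀ (n : N) (x : List E) (i : ℕ), T (u n x) = some (a i) →
      (∃ d ∈ D, num d = i ∧ d ∈ R (u n x)) ∧
      ∀ j < i, a j ∈ R (u n x) ∧ ∃ d ∈ D, num d = j ∧ d ∈ R (u n x)) :
    ∀ (x : List E) (n : N) (i : ℕ), a (i + k) ∈ R (u n x) →
      ∃ d ∈ D, num d = i ∧ ∀ n' ∈ G, d ∈ R (u n' x) :=
  cyclic_ack_protocol_general tx rx name hname_rx T R S hR0 hRrx hRother hStx hStxnull hSother u
    hinit hstep hnospur Id hId G k hkpos π hπsurj D num a huniq hturn hall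
end
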